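/- If a Kenmotsu manifold M^{2n+1}(φ,ξ,η,g) admits an almost η-Ricci soliton with potential vector field V = τξ for a smooth function τ on M and soliton functions λ, μ, then ξ(τ) = 2n − λ − μ and the Ricci tensor satisfies Ric = −(τ+λ)g − (2n − τ − λ)η⊗η; in particular, (M,g) is η-Einstein. -/

import Mathlib

/-!
An abstract algebraic model of a `(2n+1)`-dimensional Kenmotsu manifold
`M^{2n+1}(φ, ξ, η, g)`.  `M` is the set of points and `VF` is the space of
(smooth) vector fields, regarded as a module over the ring `M → ℝ` of
(smooth) functions.  The metric `g`, the Levi-Civita connection `∇`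
(torsion-free and metric), the Lie bracket, the almost contact structure
`(φ, ξ, η)` (with `φ² = -I + η ⊗ ξ`, `η(ξ) = 1`,
`g(φX, φY) = g(X,Y) - η(X)η(Y)`) and the Kenmotsu condition
`(∇_X φ)Y = g(φX, Y)ξ - η(Y)φX` are encoded as data together with their
defining identities.  The Riemann curvature `R`, the Ricci tensor `Ric`,
the Ricci operator `Q` and the scalar curvature `r` are defined from this
data via a (global) orthonormal frame.
-/

structure Kenmotsu (n : ℕ) (M : Type) (VF : Type) [AddCommGroup VF]
    [Module (M → ℝ) VF] where
  /-- directional derivative of a function along a vector field: `X(f)` -/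
  act : VF → (M → ℝ) → (M → ℝ)
  /-- the Riemannian metric -/
  g : VF → VF → M → ℝ
  /-- the Levi-Civita connection `∇` -/
  nabla : VF → VF → VF
  /-- the Lie bracket of vector fields -/
  bracket : VF → VF → VF
  /-- the `(1,1)`-tensor field `φ` -/
  phi : VF → VF
  /-- the Reeb vector field `ξ` -/
  xi : VF
  /-- the 1-form `η` -/
  eta : VF → M → ℝ
  /-- a (global) orthonormal frame -/
  frame : Fin (2 * n + 1) → VF
  act_add : ∀ X Y f, act (X + Y) f = act X f + act Y f
  act_smul : ∀ (h : M → ℝ) (X f), act (h • X) f = h * act X f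
  act_fun_add : ∀ X f₁ f₂, act X (f₁ + f₂) = act X f₁ + act X f₂
  act_fun_mul : ∀ X f₁ f₂, act X (f₁ * f₂) = act X f₁ * f₂ + f₁ * act X f₂
  act_const : ∀ (X) (c : ℝ), act X (fun _ => c) = 0
  g_symm : ∀ X Y, g X Y = g Y X
  g_add_left : ∀ X Y Z, g (X + Y) Z = g X Z + g Y Z
  g_smul_left : ∀ (f : M → ℝ) (X Y), g (f • X) Y = f * g X Y
  nabla_add_left : ∀ X Y Z, nabla (X + Y) Z = nabla X Z + nabla Y Z
  nabla_smul_left : ∀ (f : M → ℝ) (X Y), nabla (f • X) Y = f • nabla X Y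
  nabla_add_right : ∀ X Y Z, nabla X (Y + Z) = nabla X Y + nabla X Z
  nabla_leibniz : ∀ (X) (f : M → ℝ) (Y), nabla X (f • Y) = act X f • Y + f • nabla X Y
  /-- `∇` is torsion free -/
  torsion_free : ∀ X Y, nabla X Y - nabla Y X = bracket X Y
  /-- `∇ g = 0` -/
  metric_compat : ∀ X Y Z, act X (g Y Z) = g (nabla X Y) Z + g Y (nabla X Z)
  /-- `φ² = -I + η ⊗ ξ` -/
  phi_phi : ∀ X, phi (phi X) = -X + eta X • xi
  /-- `η(ξ) = 1` -/
  eta_xi : eta xi = fun _ => 1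
  /-- `g(φX, φY) = g(X,Y) - η(X)η(Y)` -/
  acm_compatible : ∀ X Y, g (phi X) (phi Y) = g X Y - eta X * eta Y
  /-- `η(X) = g(X, ξ)` -/
  eta_eq_g_xi : ∀ X, eta X = g X xi
  frame_orthonormal : ∀ i j, g (frame i) (frame j) = fun _ => if i = j then (1 : ℝ) else 0
  frame_span : ∀ X, X = ∑ i, g X (frame i) • frame i
  /-- the Kenmotsu condition `(∇_X φ)Y = g(φX, Y)ξ - η(Y)φX` -/
  kenmotsu_eq : ∀ X Y, nabla X (phi Y) - phi (nabla X Y) = g (phi X) Y • xi - eta Y • phi X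

namespace Kenmotsu

variable {n : ℕ} {M VF : Type} [AddCommGroup VF] [Module (M → ℝ) VF]
  [Module ℝ VF] [IsScalarTower ℝ (M → ℝ) VF]

/-- the Riemann curvature tensor `R(X,Y)Z = ∇_X∇_Y Z - ∇_Y∇_X Z - ∇_{[X,Y]}Z` -/
def R (K : Kenmotsu n M VF) (X Y Z : VF) : VF :=
  K.nabla X (K.nabla Y Z) - K.nabla Y (K.nabla X Z) - K.nabla (K.bracket X Y) Z

/-- the Ricci tensor, `Ric(X,Y) = Σᵢ g(R(eᵢ, X)Y, eᵢ)` -/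
def Ric (K : Kenmotsu n M VF) (X Y : VF) : M → ℝ :=
  ∑ i, K.g (K.R (K.frame i) X Y) (K.frame i)

/-- the Ricci operator `Q`, characterized by `g(QX, Y) = Ric(X,Y)` -/
def Q (K : Kenmotsu n M VF) (X : VF) : VF :=
  ∑ i, K.Ric X (K.frame i) • K.frame i

/-- the scalar curvature `r = Σᵢ Ric(eᵢ, eᵢ)` -/
def scal (K : Kenmotsu n M VF) : M → ℝ :=
  ∑ i, K.Ric (K.frame i) (K.frame i)

/-- the Lie derivative of the metric:
`(L_V g)(X,Y) = V(g(X,Y)) - g([V,X],Y) - g(X,[V,Y])` -/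
def lieg (K : Kenmotsu n M VF) (V X Y : VF) : M → ℝ :=
  K.act V (K.g X Y) - K.g (K.bracket V X) Y - K.g X (K.bracket V Y)

/-- the Lie derivative of the connection:
`(L_V ∇)(X,Y) = L_V(∇_X Y) - ∇_X(L_V Y) - ∇_{[V,X]} Y` -/
def lieD (K : Kenmotsu n M VF) (V X Y : VF) : VF :=
  K.bracket V (K.nabla X Y) - K.nabla X (K.bracket V Y) - K.nabla (K.bracket V X) Y

/-- the Lie derivative of the curvature tensor -/
def lieR (K : Kenmotsu n M VF) (V X Y Z : VF) : VF :=
  K.bracket V (K.R X Y Z) - K.R (K.bracket V X) Y Z - K.R X (K.bracket V Y) Z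
    - K.R X Y (K.bracket V Z)

/-- the Lie derivative of the 1-form `η` -/
def lieEta (K : Kenmotsu n M VF) (V X : VF) : M → ℝ :=
  K.act V (K.eta X) - K.eta (K.bracket V X)

/-- covariant derivative of the Ricci operator: `(∇_X Q)Y = ∇_X(QY) - Q(∇_X Y)` -/
def nablaQ (K : Kenmotsu n M VF) (X Y : VF) : VF :=
  K.nabla X (K.Q Y) - K.Q (K.nabla X Y)

/-- the Hessian of a function: `(Hess f)(X,Y) = X(Y(f)) - (∇_X Y)(f)` -/
def hess (K : Kenmotsu n M VF) (f : M → ℝ) (X Y : VF) : M → ℝ :=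
  K.act X (K.act Y f) - K.act (K.nabla X Y) f

/-- `g` represents an η-Ricci soliton with potential vector field `V` and real
constants `λ`, `μ`:  `(1/2)L_V g + Ric + λ g + μ η⊗η = 0`. -/
def IsEtaRicciSoliton (K : Kenmotsu n M VF) (V : VF) (l m : ℝ) : Prop :=
  ∀ X Y, (1 / 2 : ℝ) • K.lieg V X Y + K.Ric X Y + l • K.g X Y
    + m • (K.eta X * K.eta Y) = 0

/-- almost η-Ricci soliton: `λ`, `μ` are smooth functions on `M`. -/
def IsAlmostEtaRicciSoliton (K : Kenmotsu n M VF) (V : VF) (l m : M → ℝ) : Prop :=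
  ∀ X Y, (1 / 2 : ℝ) • K.lieg V X Y + K.Ric X Y + l * K.g X Y
    + m * (K.eta X * K.eta Y) = 0

/-- gradient almost η-Ricci soliton with potential function `f`:
`Hess f + Ric + λ g + μ η⊗η = 0` with `λ`, `μ` smooth functions. -/
def IsGradientAlmostEtaRicciSoliton (K : Kenmotsu n M VF) (f l m : M → ℝ) : Prop :=
  ∀ X Y, K.hess f X Y + K.Ric X Y + l * K.g X Y + m * (K.eta X * K.eta Y) = 0

/-- η-Einstein: `Ric = α g + β η⊗η` for smooth functions `α`, `β`. -/
def IsEtaEinstein (K : Kenmotsu n M VF) : Prop :=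
  ∃ a b : M → ℝ, ∀ X Y, K.Ric X Y = a * K.g X Y + b * (K.eta X * K.eta Y)

/-- Einstein: `Ric` is a constant multiple of `g`. -/
def IsEinstein (K : Kenmotsu n M VF) : Prop :=
  ∃ c : ℝ, ∀ X Y, K.Ric X Y = c • K.g X Y

/-- constant φ-holomorphic sectional curvature `H` (Kenmotsu's space-form
condition):
`4R(X,Y)Z = (H−3){g(Y,Z)X − g(X,Z)Y} + (H+1){η(X)η(Z)Y − η(Y)η(Z)X +
η(Y)g(X,Z)ξ − η(X)g(Y,Z)ξ + g(X,φZ)φY − g(Y,φZ)φX + 2g(X,φY)φZ}`. -/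
def HasConstPhiSectionalCurvature (K : Kenmotsu n M VF) (H : ℝ) : Prop :=
  ∀ X Y Z, (4 : ℝ) • K.R X Y Z
    = (H - 3) • (K.g Y Z • X - K.g X Z • Y)
      + (H + 1) • ((K.eta X * K.eta Z) • Y - (K.eta Y * K.eta Z) • X
        + (K.eta Y * K.g X Z) • K.xi - (K.eta X * K.g Y Z) • K.xi
        + K.g X (K.phi Z) • K.phi Y - K.g Y (K.phi Z) • K.phi X
        + (2 : ℝ) • (K.g X (K.phi Y) • K.phi Z))

end Kenmotsu

/-!
Since `ξ` is the Reeb field of a Kenmotsu structure, `∇_X ξ = X − η(X)ξ`; hence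
`R(X,Y)ξ = η(X)Y − η(Y)X` and `Ric(X,ξ) = −2n η(X)`, while
`L_{τξ} g = dτ ⊗ η + η ⊗ dτ + 2τ(g − η ⊗ η)`.
Evaluating the soliton equation on `(ξ, ξ)` gives `ξ(τ) = 2n − λ − μ`, on `(X, ξ)` it gives
`dτ = ξ(τ) η`, and substituting this back leaves `Ric` as a combination of `g` and `η ⊗ η`.
-/

namespace Kenmotsu

section

variable {n : ℕ} {M VF : Type} [AddCommGroup VF] [Module (M → ℝ) VF] (K : Kenmotsu n M VF)

def gLeft (Y : VF) : VF →ₗ[M → ℝ] M → ℝ where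
  toFun X := K.g X Y
  map_add' X X' := K.g_add_left X X' Y
  map_smul' f X := K.g_smul_left f X Y

@[simp] lemma gLeft_apply (X Y : VF) : K.gLeft Y X = K.g X Y := rfl

lemma g_sub_left (X Y W : VF) : K.g (X - Y) W = K.g X W - K.g Y W :=
  (K.gLeft W).map_sub X Y

lemma g_add_right (X Y Z : VF) : K.g X (Y + Z) = K.g X Y + K.g X Z := by
  rw [K.g_symm, K.g_add_left, K.g_symm Y, K.g_symm Z]

lemma g_smul_right (f : M → ℝ) (X Y : VF) : K.g X (f • Y) = f * K.g X Y := by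
  rw [K.g_symm, K.g_smul_left, K.g_symm]

lemma g_zero_right (X : VF) : K.g X 0 = 0 := by
  rw [K.g_symm]; exact (K.gLeft X).map_zero

lemma g_neg_right (X Y : VF) : K.g X (-Y) = -K.g X Y := by
  rw [K.g_symm, K.g_symm X]; exact (K.gLeft X).map_neg Y

lemma g_sub_right (X Y Z : VF) : K.g X (Y - Z) = K.g X Y - K.g X Z := by
  rw [K.g_symm, K.g_sub_left, K.g_symm Y, K.g_symm Z]

lemma g_frame_self (i : Fin (2 * n + 1)) : K.g (K.frame i) (K.frame i) = 1 := by
  rw [K.frame_orthonormal, if_pos rfl]; rfl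

lemma g_eq_sum_frame (X Y : VF) :
    K.g X Y = ∑ i, K.g X (K.frame i) * K.g Y (K.frame i) := by
  conv_lhs => rw [K.frame_span X, ← K.gLeft_apply, map_sum]
  simp [K.g_symm _ Y]

lemma eq_of_g_eq {X Y : VF} (h : ∀ W, K.g X W = K.g Y W) : X = Y := by
  rw [K.frame_span X, K.frame_span Y]
  simp only [h]

lemma nabla_sub_right (X Y Z : VF) : K.nabla X (Y - Z) = K.nabla X Y - K.nabla X Z :=
  (AddMonoidHom.mk' (K.nabla X) (K.nabla_add_right X)).map_sub Y Z

lemma nabla_zero_right (X : VF) : K.nabla X 0 = 0 := by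
  simpa using K.nabla_sub_right X 0 0

lemma act_one (X : VF) : K.act X 1 = 0 := K.act_const X 1

lemma eta_xi_one : K.eta K.xi = 1 := K.eta_xi

lemma g_xi_xi : K.g K.xi K.xi = 1 := by
  rw [← K.eta_eq_g_xi, K.eta_xi_one]

lemma g_xi_right (X : VF) : K.g X K.xi = K.eta X := (K.eta_eq_g_xi X).symm

lemma phi_phi_xi : K.phi (K.phi K.xi) = 0 := by
  rw [K.phi_phi, K.eta_xi_one, one_smul, neg_add_cancel]

/-- `g(φ²X, φ²X) = g(φX, φX)` forces `η(φX)² = 0`. -/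
lemma eta_phi (X : VF) : K.eta (K.phi X) = 0 := by
  have hsq : K.eta (K.phi X) * K.eta (K.phi X) = 0 := by
    have h := K.acm_compatible (K.phi X) (K.phi X)
    rw [K.phi_phi, K.acm_compatible] at h
    simp only [K.g_add_left, K.g_add_right, K.g_smul_left, K.g_smul_right, K.g_neg_right,
      K.g_symm (-X), K.g_symm K.xi, K.g_xi_right, K.eta_xi_one] at h
    linear_combination h
  funext p
  exact mul_self_eq_zero.mp (congrFun hsq p)

lemma phi_xi : K.phi K.xi = 0 := by
  refine K.eq_of_g_eq fun W => ?_
  have h := K.acm_compatible W (K.phi K.xi)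
  rw [K.phi_phi_xi, K.g_zero_right, K.eta_phi, mul_zero, sub_zero] at h
  rw [K.g_symm, ← h, K.g_symm, K.g_zero_right]

lemma g_phi_xi (X : VF) : K.g (K.phi X) K.xi = 0 := by
  rw [K.g_xi_right, K.eta_phi]

lemma eta_nabla_xi (X : VF) : K.eta (K.nabla X K.xi) = 0 := by
  have h := K.metric_compat X K.xi K.xi
  rw [K.g_xi_xi, K.act_one, K.g_symm K.xi, K.g_xi_right] at h
  funext p
  have hp := congrFun h p
  simp only [Pi.zero_apply, Pi.add_apply] at hp ⊢
  linarith

lemma phi_nabla_xi (X : VF) : K.phi (K.nabla X K.xi) = K.phi X := by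
  have h := K.kenmotsu_eq X K.xi
  rw [K.phi_xi, K.nabla_zero_right, K.g_phi_xi, K.eta_xi_one, zero_smul, one_smul] at h
  simpa using h

lemma eta_bracket (X Y : VF) :
    K.eta (K.bracket X Y) = K.eta (K.nabla X Y) - K.eta (K.nabla Y X) := by
  rw [← K.torsion_free, K.eta_eq_g_xi, K.g_sub_left, K.g_xi_right, K.g_xi_right]

lemma nabla_xi (X : VF) : K.nabla X K.xi = X - K.eta X • K.xi := by
  have h := congrArg K.phi (K.phi_nabla_xi X)
  rw [K.phi_phi, K.phi_phi, K.eta_nabla_xi, zero_smul, add_zero] at h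
  rw [← neg_neg (K.nabla X K.xi), h]
  abel

lemma act_eta (X Y : VF) :
    K.act X (K.eta Y) = K.eta (K.nabla X Y) + K.g X Y - K.eta X * K.eta Y := by
  rw [K.eta_eq_g_xi Y, K.metric_compat, K.nabla_xi, K.g_sub_right, K.g_smul_right, K.g_xi_right,
    K.g_xi_right, K.g_symm Y]
  ring

lemma R_xi (X Y : VF) : K.R X Y K.xi = K.eta X • Y - K.eta Y • X := by
  rw [R, K.nabla_xi Y, K.nabla_xi X, K.nabla_xi (K.bracket X Y), K.nabla_sub_right,
    K.nabla_sub_right, K.nabla_leibniz, K.nabla_leibniz, K.nabla_xi X, K.nabla_xi Y,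
    K.act_eta, K.act_eta, K.eta_bracket, ← K.torsion_free, K.g_symm Y X]
  module

lemma Ric_xi (X : VF) : K.Ric X K.xi = -(2 * n : M → ℝ) * K.eta X := by
  have hη : ∑ i, K.eta (K.frame i) * K.g X (K.frame i) = K.eta X := by
    simp only [K.eta_eq_g_xi, K.g_eq_sum_frame X K.xi, K.g_symm K.xi, mul_comm]
  simp only [Ric, R_xi, K.g_sub_left, K.g_smul_left, K.g_frame_self, mul_one,
    Finset.sum_sub_distrib, hη, Finset.sum_const, Finset.card_univ, Fintype.card_fin, nsmul_eq_mul]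
  push_cast
  ring

lemma lieg_smul_xi (τ : M → ℝ) (X Y : VF) :
    K.lieg (τ • K.xi) X Y
      = K.act X τ * K.eta Y + K.act Y τ * K.eta X + 2 * τ * (K.g X Y - K.eta X * K.eta Y) := by
  rw [lieg, ← K.torsion_free, ← K.torsion_free, K.metric_compat, K.nabla_leibniz X τ K.xi,
    K.nabla_leibniz Y τ K.xi, K.nabla_xi X, K.nabla_xi Y]
  simp only [K.g_sub_left, K.g_sub_right, K.g_add_left, K.g_add_right, K.g_smul_left,
    K.g_smul_right, K.g_xi_right, K.g_symm K.xi]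
  ring

end

namespace IsAlmostEtaRicciSoliton

variable {n : ℕ} {M VF : Type} [AddCommGroup VF] [Module (M → ℝ) VF] {K : Kenmotsu n M VF}
  {τ l m : M → ℝ}

lemma apply_smul_xi (h : K.IsAlmostEtaRicciSoliton (τ • K.xi) l m) (X Y : VF) (p : M) :
    (K.act X τ p * K.eta Y p + K.act Y τ p * K.eta X p) / 2
      + τ p * (K.g X Y p - K.eta X p * K.eta Y p) + K.Ric X Y p + l p * K.g X Y p
      + m p * (K.eta X p * K.eta Y p) = 0 := by
  have hp := congrFun (h X Y) p
  simp only [K.lieg_smul_xi, Pi.add_apply, Pi.sub_apply, Pi.mul_apply, Pi.smul_apply,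
    smul_eq_mul, Pi.ofNat_apply] at hp
  linear_combination hp

lemma act_xi_eq (h : K.IsAlmostEtaRicciSoliton (τ • K.xi) l m) (p : M) :
    K.act K.xi τ p = 2 * n - l p - m p := by
  have hp := h.apply_smul_xi K.xi K.xi p
  simp only [K.Ric_xi, K.eta_xi_one, K.g_xi_xi, Pi.mul_apply, Pi.neg_apply, Pi.ofNat_apply,
    Pi.natCast_apply] at hp
  linear_combination hp

lemma act_eq_mul_eta (h : K.IsAlmostEtaRicciSoliton (τ • K.xi) l m) (X : VF) (p : M) :
    K.act X τ p = (2 * n - l p - m p) * K.eta X p := by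
  have hp := h.apply_smul_xi X K.xi p
  simp only [K.Ric_xi, K.eta_xi_one, K.g_xi_right, h.act_xi_eq, Pi.mul_apply, Pi.neg_apply,
    Pi.ofNat_apply, Pi.natCast_apply] at hp
  linear_combination 2 * hp

lemma Ric_eq (h : K.IsAlmostEtaRicciSoliton (τ • K.xi) l m) (X Y : VF) :
    K.Ric X Y = -((τ + l) * K.g X Y)
      - (fun p => 2 * (n : ℝ) - τ p - l p) * (K.eta X * K.eta Y) := by
  funext p
  simp only [Pi.sub_apply, Pi.neg_apply, Pi.mul_apply, Pi.add_apply]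
  linear_combination h.apply_smul_xi X Y p - K.eta Y p / 2 * h.act_eq_mul_eta X p
    - K.eta X p / 2 * h.act_eq_mul_eta Y p

end IsAlmostEtaRicciSoliton

end Kenmotsu

theorem almostEtaRicciSoliton_collinear_etaEinstein_general
    (n : ℕ) (M VF : Type) [AddCommGroup VF] [Module (M → ℝ) VF]
    (K : Kenmotsu n M VF) (V : VF) (l m : M → ℝ)
    (hsol : K.IsAlmostEtaRicciSoliton V l m)
    (τ : M → ℝ) (hV : V = τ • K.xi) :
    (K.act K.xi τ = fun p => 2 * (n : ℝ) - l p - m p) ∧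
      (∀ X Y, K.Ric X Y
        = -((τ + l) * K.g X Y)
          - (fun p => 2 * (n : ℝ) - τ p - l p) * (K.eta X * K.eta Y)) ∧
      K.IsEtaEinstein := by
  subst hV
  refine ⟨funext hsol.act_xi_eq, hsol.Ric_eq, -(τ + l), -fun p => 2 * (n : ℝ) - τ p - l p,
    fun X Y => ?_⟩
  rw [hsol.Ric_eq]
  ring

/-- If a Kenmotsu manifold `M^{2n+1}` admits an almost η-Ricci
soliton with potential vector field `V = τξ` (`τ` a smooth function) and
soliton functions `λ`, `μ`, then `ξ(τ) = 2n − λ − μ` and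
`Ric = −(τ+λ)g − (2n − τ − λ)η⊗η`; in particular it is η-Einstein. -/
theorem almostEtaRicciSoliton_collinear_etaEinstein
    (n : ℕ) (M VF : Type) [AddCommGroup VF] [Module (M → ℝ) VF]
    [Module ℝ VF] [IsScalarTower ℝ (M → ℝ) VF]
    (K : Kenmotsu n M VF) (V : VF) (l m : M → ℝ)
    (hsol : K.IsAlmostEtaRicciSoliton V l m)
    (τ : M → ℝ) (hV : V = τ • K.xi) :
    (K.act K.xi τ = fun p => 2 * (n : ℝ) - l p - m p) ∧
      (∀ X Y, K.Ric X Y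
        = -((τ + l) * K.g X Y)
          - (fun p => 2 * (n : ℝ) - τ p - l p) * (K.eta X * K.eta Y)) ∧
      K.IsEtaEinstein :=
  almostEtaRicciSoliton_collinear_etaEinstein_general n M VF K V l m hsol τ hV
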